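/- arXiv:2210.03069 — 2 statements merged into one kernel-verified Lean document; each statement's English description precedes it below -/
import Mathlib

section
/- Let σ : ℝ → ℝ be homogeneous (σ(αx) = ασ(x) for α > 0) and suppose (w*, v*) minimizes (1/2)(‖w‖² + ‖v‖²) over all pairs (w, v) ∈ ℝ^p × ℝ^q such that the function x ↦ v·σ(wᵀx) equals a fixed nonzero function f. Then ‖w*‖ = ‖v*‖. -/
open scoped RealInnerProductSpace

theorem stmt_4 (p q : ℕ) (σ : ℝ → ℝ)
    (hσ : ∀ α : ℝ, 0 < α → ∀ x : ℝ, σ (α * x) = α * σ x)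
    (f : EuclideanSpace ℝ (Fin p) → EuclideanSpace ℝ (Fin q)) (hf : f ≠ 0)
    (wstar : EuclideanSpace ℝ (Fin p)) (vstar : EuclideanSpace ℝ (Fin q))
    (hrep : ∀ x, σ ((inner ℝ wstar x : ℝ)) • vstar = f x)
    (hmin : ∀ (w : EuclideanSpace ℝ (Fin p)) (v : EuclideanSpace ℝ (Fin q)),
      (∀ x, σ ((inner ℝ w x : ℝ)) • v = f x) →
      (1/2) * (‖wstar‖^2 + ‖vstar‖^2) ≤ (1/2) * (‖w‖^2 + ‖v‖^2)) :
    ‖wstar‖ = ‖vstar‖ := by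
  have hσ0 : σ 0 = 0 := by
    have := hσ 2 (by norm_num) 0
    simp at this
    linarith
  have hv : vstar ≠ 0 := by
    intro h
    apply hf
    funext x
    rw [← hrep x, h, smul_zero]
    rfl
  have hw : wstar ≠ 0 := by
    intro h
    apply hf
    funext x
    rw [← hrep x, h]
    simp [hσ0]
  set a := ‖wstar‖ with ha
  set b := ‖vstar‖ with hb
  have ha0 : 0 < a := norm_pos_iff.mpr hw
  have hb0 : 0 < b := norm_pos_iff.mpr hv
  set α := Real.sqrt (a / b) with hα
  have hα0 : 0 < α := Real.sqrt_pos.mpr (div_pos ha0 hb0)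
  have hα2 : α ^ 2 = a / b := Real.sq_sqrt (le_of_lt (div_pos ha0 hb0))
  have hrep' : ∀ x, σ ((inner ℝ (α⁻¹ • wstar) x : ℝ)) • (α • vstar) = f x := by
    intro x
    rw [real_inner_smul_left, hσ α⁻¹ (inv_pos.mpr hα0), smul_smul]
    have e : α⁻¹ * σ (inner ℝ wstar x) * α = σ (inner ℝ wstar x) := by
      field_simp
    rw [e, hrep x]
  have key := hmin (α⁻¹ • wstar) (α • vstar) hrep'
  rw [norm_smul, norm_smul] at key
  simp only [norm_inv, Real.norm_eq_abs, abs_of_pos hα0] at key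
  have h1 : (α⁻¹ * a) ^ 2 = α⁻¹ ^ 2 * a ^ 2 := by ring
  have h2 : (α * b) ^ 2 = α ^ 2 * b ^ 2 := by ring
  have hαinv2 : α⁻¹ ^ 2 = b / a := by
    rw [inv_pow, hα2]
    field_simp
  rw [h1, h2, hαinv2, hα2] at key
  have hab : a ^ 2 + b ^ 2 ≤ 2 * (a * b) := by
    have e1 : b / a * a ^ 2 = a * b := by field_simp
    have e2 : a / b * b ^ 2 = a * b := by field_simp
    rw [e1, e2] at key
    linarith
  nlinarith [sq_nonneg (a - b)]
end

section
/- Let L : X → ℝ and let R, R̃ : X → ℝ satisfy: (i) for every x ∈ X there exists x' ∈ X with L(x') = L(x), R̃(x') = R̃(x), and R(x') = 2·R̃(x'); and (ii) R(x) ≥ 2·R̃(x) for all x ∈ X. Then for any λ > 0, the infimum of L + (λ/2)·R over X equals the infimum of L + λ·R̃ over X, and any minimizer of L + (λ/2)·R is a minimizer of L + λ·R̃. -/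
/-!
Rescaling changes neither the data loss nor the path norm, and can make the weight decay
regularizer equal to twice the path norm. So the weight decay objective dominates the path-norm
objective pointwise, while every value of the path-norm objective is attained by the weight decay
objective. Two such functions have the same infimum (also when the infimum is the junk value
of an empty or unbounded range), and a minimizer of the larger one is a
minimizer of the smaller one.
-/

section Domination

variable {ι α : Type*} {f g : ι → α}

theorem ciInf_eq_ciInf_of_forall_exists_le [ConditionallyCompleteLinearOrder α]
    (hf : ∀ i, ∃ j, g j ≤ f i) (hg : ∀ j, ∃ i, f i ≤ g j) :
    ⨅ i, f i = ⨅ j, g j :=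
  csInf_eq_csInf_of_forall_exists_le
    (by rintro _ ⟨i, rfl⟩; obtain ⟨j, hj⟩ := hf i; exact ⟨g j, ⟨j, rfl⟩, hj⟩)
    (by rintro _ ⟨j, rfl⟩; obtain ⟨i, hi⟩ := hg j; exact ⟨f i, ⟨i, rfl⟩, hi⟩)

theorem minimizer_of_le_of_forall_exists_le [Preorder α]
    (hgf : ∀ i, g i ≤ f i) (hfg : ∀ j, ∃ i, f i ≤ g j) {i₀ : ι} (hmin : ∀ i, f i₀ ≤ f i) :
    ∀ j, g i₀ ≤ g j := by
  intro j
  obtain ⟨i, hi⟩ := hfg j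
  calc g i₀ ≤ f i₀ := hgf i₀
    _ ≤ f i := hmin i
    _ ≤ g j := hi

end Domination

section WeightDecay

variable {X : Type*} {L R Rt : X → ℝ} {lam : ℝ}

theorem add_mul_le_add_half_mul (hlam : 0 ≤ lam) (hR : ∀ x, R x ≥ 2 * Rt x) (x : X) :
    L x + lam * Rt x ≤ L x + (lam / 2) * R x := by
  have := mul_le_mul_of_nonneg_left (hR x) hlam
  linarith

theorem exists_add_half_mul_eq
    (hrescale : ∀ x : X, ∃ x' : X, L x' = L x ∧ Rt x' = Rt x ∧ R x' = 2 * Rt x') (x : X) :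
    ∃ x', L x' + (lam / 2) * R x' = L x + lam * Rt x := by
  obtain ⟨x', hL, hRt, hR⟩ := hrescale x
  exact ⟨x', by rw [hR, hL, hRt]; ring⟩

end WeightDecay

theorem stmt_5 {X : Type*} (L R Rt : X → ℝ) (lam : ℝ) (hlam : 0 < lam)
    (h1 : ∀ x : X, ∃ x' : X, L x' = L x ∧ Rt x' = Rt x ∧ R x' = 2 * Rt x')
    (h2 : ∀ x : X, R x ≥ 2 * Rt x) :
    (⨅ x : X, (L x + (lam / 2) * R x)) = (⨅ x : X, (L x + lam * Rt x)) ∧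
    (∀ x₀ : X, (∀ x : X, L x₀ + (lam / 2) * R x₀ ≤ L x + (lam / 2) * R x) →
      ∀ x : X, L x₀ + lam * Rt x₀ ≤ L x + lam * Rt x) := by
  have hle := add_mul_le_add_half_mul (L := L) hlam.le h2
  have hattained : ∀ x, ∃ x', L x' + (lam / 2) * R x' ≤ L x + lam * Rt x := fun x =>
    (exists_add_half_mul_eq h1 x).imp fun _ h => h.le
  exact ⟨ciInf_eq_ciInf_of_forall_exists_le (fun x => ⟨x, hle x⟩) hattained,
    fun _ hmin => minimizer_of_le_of_forall_exists_le hle hattained hmin⟩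
end
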